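/- Let S be a monoid with a zero element, let X be a class of centred S-acts, and suppose (L, R) is a weak factorization system in the category of centred S-acts with the property that, for every centred S-act X, the unique map 0 → X lies in L if and only if X ∈ X (where 0 denotes the one-element centred S-act). Then every centred S-act has an X-precover. -/

import Mathlib

universe u

/-- A right `S`-act: a set with a right action of the monoid `S`. -/
structure SAct (S : Type u) [Monoid S] : Type (u + 1) where
  carrier : Type u
  act : carrier → S → carrier
  act_one : ∀ a, act a 1 = a
  act_mul : ∀ a s t, act (act a s) t = act a (s * t)

/-- A map of right `S`-acts. -/
structure SMap {S : Type u} [Monoid S] (A B : SAct S) : Type u where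
  toFun : A.carrier → B.carrier
  map_act : ∀ a s, toFun (A.act a s) = B.act (toFun a) s

namespace SMap

variable {S : Type u} [Monoid S]

/-- Composition of `S`-maps. -/
def comp {A B C : SAct S} (g : SMap B C) (f : SMap A B) : SMap A C :=
  ⟨fun a => g.toFun (f.toFun a), fun a s => by
    show g.toFun (f.toFun (A.act a s)) = C.act (g.toFun (f.toFun a)) s
    rw [f.map_act, g.map_act]⟩

/-- The identity `S`-map. -/
def id (A : SAct S) : SMap A A := ⟨fun a => a, fun _ _ => rfl⟩

end SMap

variable {S : Type u} [Monoid S]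

/-- `f` has the left lifting property with respect to `g` (equivalently, `g` has the
right lifting property with respect to `f`). -/
def Lifts {A B C D : SAct S} (f : SMap A B) (g : SMap C D) : Prop :=
  ∀ (u : SMap A C) (v : SMap B D), g.comp u = v.comp f →
    ∃ h : SMap B C, h.comp f = u ∧ g.comp h = v

/-- A class of `S`-maps. -/
def MapClass (S : Type u) [Monoid S] : Type (u + 1) :=
  ∀ {A B : SAct S}, SMap A B → Prop

/-- `C^□`: the class of maps with the right lifting property with respect to every map of `C`. -/
def rlpC (C : MapClass S) : MapClass S :=
  fun {_ _} g => ∀ {A B : SAct S} (f : SMap A B), C f → Lifts f g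

/-- `□C`: the class of maps with the left lifting property with respect to every map of `C`. -/
def llpC (C : MapClass S) : MapClass S :=
  fun {_ _} f => ∀ {C' D : SAct S} (g : SMap C' D), C g → Lifts f g

/-- `cof(C) = □(C^□)`. -/
def cofC (C : MapClass S) : MapClass S := llpC (rlpC C)

/-- `fib(C) = (□C)^□`. -/
def fibC (C : MapClass S) : MapClass S := rlpC (llpC C)

/-- `(L, R)` is a weak factorization system. -/
structure IsWFS (L R : MapClass S) : Prop where
  rlp_eq : ∀ {A B : SAct S} (g : SMap A B), R g ↔ rlpC L g
  llp_eq : ∀ {A B : SAct S} (f : SMap A B), L f ↔ llpC R f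
  factor : ∀ {A B : SAct S} (h : SMap A B),
    ∃ (C : SAct S) (f : SMap A C) (g : SMap C B), L f ∧ R g ∧ g.comp f = h

/-- `g : A → C` is a retract of `f : A → B`:  there are `α : C → B`, `β : B → C` with
`β ∘ α = 1`, `α ∘ g = f` and `β ∘ f = g`. -/
def RetractOfMap {A B C : SAct S} (g : SMap A C) (f : SMap A B) : Prop :=
  ∃ (α : SMap C B) (β : SMap B C),
    β.comp α = SMap.id C ∧ α.comp g = f ∧ β.comp f = g

/-- The square with sides `f : A → B`, `u : A → X`, `fbar : X → P`, `v : B → P` is a pushout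
square (i.e. `fbar` is the pushout of `f` along `u`). -/
structure IsPushoutSq {A B X P : SAct S}
    (f : SMap A B) (u : SMap A X) (fbar : SMap X P) (v : SMap B P) : Prop where
  comm : fbar.comp u = v.comp f
  ue : ∀ ⦃Q : SAct S⦄ (g' : SMap X Q) (v' : SMap B Q), g'.comp u = v'.comp f →
    ∃! k : SMap P Q, k.comp fbar = g' ∧ k.comp v = v'

/-- The square with sides `pr1 : P → D`, `pr2 : P → A`, `g : A → B`, `v : D → B` is a
pullback square (i.e. `pr1` is the pullback of `g` along `v`). -/
structure IsPullbackSq {P A D B : SAct S}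
    (pr1 : SMap P D) (pr2 : SMap P A) (g : SMap A B) (v : SMap D B) : Prop where
  comm : g.comp pr2 = v.comp pr1
  ue : ∀ ⦃Q : SAct S⦄ (q1 : SMap Q D) (q2 : SMap Q A), g.comp q2 = v.comp q1 →
    ∃! k : SMap Q P, pr1.comp k = q1 ∧ pr2.comp k = q2

/-- `f` is an isomorphism of `S`-acts. -/
def IsIsoMap {A B : SAct S} (f : SMap A B) : Prop :=
  ∃ g : SMap B A, g.comp f = SMap.id A ∧ f.comp g = SMap.id B

/-- A directed system of `S`-acts indexed by the ordinals `< lam`. -/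
structure OSeq (S : Type u) [Monoid S] (lam : Ordinal.{u}) where
  obj : ∀ a : Ordinal.{u}, a < lam → SAct S
  map : ∀ (a b : Ordinal.{u}) (hab : a ≤ b) (hb : b < lam),
    SMap (obj a (lt_of_le_of_lt hab hb)) (obj b hb)
  map_id : ∀ (a : Ordinal.{u}) (ha : a < lam), map a a le_rfl ha = SMap.id (obj a ha)
  map_comp : ∀ (a b c : Ordinal.{u}) (hab : a ≤ b) (hbc : b ≤ c) (hc : c < lam),
    (map b c hbc hc).comp (map a b hab (lt_of_le_of_lt hbc hc)) = map a c (le_trans hab hbc) hc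

/-- A cocone over a directed system of `S`-acts indexed by ordinals `< lam`. -/
structure OCocone {lam : Ordinal.{u}} (F : OSeq S lam) where
  pt : SAct S
  ι : ∀ (a : Ordinal.{u}) (ha : a < lam), SMap (F.obj a ha) pt
  fac : ∀ (a b : Ordinal.{u}) (hab : a ≤ b) (hb : b < lam),
    (ι b hb).comp (F.map a b hab hb) = ι a (lt_of_le_of_lt hab hb)

/-- A cocone is a (directed) colimit if it satisfies the universal property. -/
def IsColimitO {lam : Ordinal.{u}} {F : OSeq S lam} (c : OCocone F) : Prop :=
  ∀ d : OCocone F, ∃! k : SMap c.pt d.pt, ∀ (a : Ordinal.{u}) (ha : a < lam),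
    k.comp (c.ι a ha) = d.ι a ha

/-- Restriction of a directed system to the ordinals `< γ`. -/
def OSeq.restrict {lam : Ordinal.{u}} (F : OSeq S lam) (γ : Ordinal.{u}) (hγ : γ ≤ lam) :
    OSeq S γ where
  obj a ha := F.obj a (lt_of_lt_of_le ha hγ)
  map a b hab hb := F.map a b hab (lt_of_lt_of_le hb hγ)
  map_id a ha := F.map_id a _
  map_comp a b c hab hbc hc := F.map_comp a b c hab hbc _

/-- The cocone over the restriction to `γ` with vertex `F.obj γ`. -/
def OSeq.coconeAt {lam : Ordinal.{u}} (F : OSeq S lam) (γ : Ordinal.{u}) (hγ : γ < lam) :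
    OCocone (F.restrict γ hγ.le) where
  pt := F.obj γ hγ
  ι a ha := F.map a γ ha.le hγ
  fac a b hab hb := F.map_comp a b γ hab hb.le hγ

/-- A `λ`-sequence: a directed system of `S`-acts indexed by the ordinals `< λ`, together
with a directed colimit, which is continuous at every limit ordinal `γ ≤ λ`. -/
structure LambdaSequence (S : Type u) [Monoid S] (lam : Ordinal.{u}) where
  seq : OSeq S lam
  cocone : OCocone seq
  isColimit : IsColimitO cocone
  continuity : ∀ (γ : Ordinal.{u}) (hγ : γ < lam), Order.IsSuccLimit γ →
    IsColimitO (seq.coconeAt γ hγ)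

/-- An ordinal `lam` is `γ`-filtered: it is a limit ordinal and every subset of `lam` of
cardinality at most `γ` has supremum `< lam`. -/
def IsGammaFiltered (γ : Cardinal.{u}) (lam : Ordinal.{u}) : Prop :=
  Order.IsSuccLimit lam ∧ ∀ A : Set Ordinal.{u}, A ⊆ Set.Iio lam →
    Cardinal.mk A ≤ Cardinal.lift.{u + 1} γ → sSup A < lam

/-- A split monomorphism. -/
def SplitMonoM {A B : SAct S} (f : SMap A B) : Prop :=
  ∃ γ : SMap B A, γ.comp f = SMap.id A

/-- A split epimorphism. -/
def SplitEpiM {A B : SAct S} (f : SMap A B) : Prop :=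
  ∃ γ : SMap B A, f.comp γ = SMap.id B

/-- A unitary monomorphism of `S`-acts. -/
def IsUnitaryMono {X Y : SAct S} (f : SMap X Y) : Prop :=
  Function.Injective f.toFun ∧
    ∀ (y : Y.carrier) (s : S), Y.act y s ∈ Set.range f.toFun → y ∈ Set.range f.toFun

/-- The class of unitary monomorphisms. -/
def UnitaryClass (S : Type u) [Monoid S] : MapClass S := fun {_ _} f => IsUnitaryMono f

/-- The class of split epimorphisms. -/
def SplitEpiClass (S : Type u) [Monoid S] : MapClass S := fun {_ _} f => SplitEpiM f

/-- `P` is projective with respect to the map `f : A → B`. -/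
def ProjWrt (P : SAct S) {A B : SAct S} (f : SMap A B) : Prop :=
  ∀ g : SMap P B, ∃ h : SMap P A, f.comp h = g

/-- `Q` is a retract of the act `P`. -/
def ActRetract (Q P : SAct S) : Prop :=
  ∃ (α : SMap Q P) (β : SMap P Q), β.comp α = SMap.id Q

/-- The coproduct (disjoint union) of two `S`-acts. -/
def SAct.coprod (A B : SAct S) : SAct S where
  carrier := A.carrier ⊕ B.carrier
  act x s := Sum.elim (fun a => Sum.inl (A.act a s)) (fun b => Sum.inr (B.act b s)) x
  act_one x := by cases x <;> simp [SAct.act_one]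
  act_mul x s t := by cases x <;> simp [SAct.act_mul]

/-- The coproduct (disjoint union) of a family of `S`-acts. -/
def SAct.sigmaCoprod {ι : Type u} (F : ι → SAct S) : SAct S where
  carrier := Σ i, (F i).carrier
  act x s := ⟨x.1, (F x.1).act x.2 s⟩
  act_one x := by cases x with | mk i a => exact congrArg (Sigma.mk i) ((F i).act_one a)
  act_mul x s t := by cases x with | mk i a => exact congrArg (Sigma.mk i) ((F i).act_mul a s t)

/-- The coproduct of a family of `S`-maps. -/
def coprodMap {ι : Type u} {A B : ι → SAct S} (f : ∀ i, SMap (A i) (B i)) :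
    SMap (SAct.sigmaCoprod A) (SAct.sigmaCoprod B) where
  toFun x := ⟨x.1, (f x.1).toFun x.2⟩
  map_act x s := congrArg (Sigma.mk x.1) ((f x.1).map_act x.2 s)

/-- An isomorphism class predicate: `A` and `B` are isomorphic `S`-acts. -/
def ActIso (A B : SAct S) : Prop := ∃ f : SMap A B, Function.Bijective f.toFun

/-- `B` is a direct summand of `A`. -/
def IsDirectSummand (B A : SAct S) : Prop := ∃ C : SAct S, ActIso (SAct.coprod B C) A

/-- The subact of `Y` on a subset `T` closed under the action. -/
def SAct.sub (Y : SAct S) (T : Set Y.carrier) (hT : ∀ t ∈ T, ∀ s : S, Y.act t s ∈ T) :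
    SAct S where
  carrier := {y // y ∈ T}
  act t s := ⟨Y.act t.1 s, hT t.1 t.2 s⟩
  act_one t := Subtype.ext (Y.act_one t.1)
  act_mul t s r := Subtype.ext (Y.act_mul t.1 s r)

/-- A class of `S`-acts. -/
def ActClass (S : Type u) [Monoid S] : Type (u + 1) := SAct S → Prop

/-- The class `R_X` of maps with respect to which every act of `X` is projective. -/
def RXClass (𝒳 : ActClass S) : MapClass S :=
  fun {_ _} f => ∀ P : SAct S, 𝒳 P → ProjWrt P f

/-- The class `U_X` of unitary monomorphisms `f : X → Y` with `Y ∖ im f ∈ X`. -/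
def UXClass (𝒳 : ActClass S) : MapClass S :=
  fun {_ Y} f =>
    ∃ (_ : Function.Injective f.toFun)
      (hu : ∀ (y : Y.carrier) (s : S),
        Y.act y s ∈ Set.range f.toFun → y ∈ Set.range f.toFun),
      𝒳 (Y.sub (Set.range f.toFun)ᶜ (fun t ht s hmem => ht (hu t s hmem)))

/-- Every `S`-act has an `𝒳`-precover. -/
def HasPrecover (𝒳 : ActClass S) (A : SAct S) : Prop :=
  ∃ (P : SAct S) (g : SMap P A), 𝒳 P ∧
    ∀ ⦃P' : SAct S⦄ (g' : SMap P' A), 𝒳 P' → ∃ f : SMap P' P, g.comp f = g'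

/-- A projective `S`-act. -/
def ProjectiveAct (P : SAct S) : Prop :=
  ∀ ⦃A B : SAct S⦄ (f : SMap A B), Function.Surjective f.toFun → ProjWrt P f

/-- The class of all surjective `S`-maps (epimorphisms). -/
def EpiClass (S : Type u) [Monoid S] : MapClass S :=
  fun {_ _} f => Function.Surjective f.toFun

/-- The free `S`-act on `n` generators. -/
def freeAct (S : Type u) [Monoid S] (n : ℕ) : SAct S where
  carrier := Fin n × S
  act p s := (p.1, p.2 * s)
  act_one p := by simp
  act_mul p s t := by simp [mul_assoc]

/-- `r` is a congruence on the `S`-act `A`. -/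
def IsCong (A : SAct S) (r : A.carrier → A.carrier → Prop) : Prop :=
  Equivalence r ∧ ∀ (a b : A.carrier) (s : S), r a b → r (A.act a s) (A.act b s)

/-- A finitely presented `S`-act: a quotient of a finitely generated free act by a
finitely generated congruence. -/
def FinPresented (M : SAct S) : Prop :=
  ∃ (n : ℕ) (q : SMap (freeAct S n) M), Function.Surjective q.toFun ∧
    ∃ (m : ℕ) (p : Fin m → (freeAct S n).carrier × (freeAct S n).carrier),
      (∀ i, q.toFun (p i).1 = q.toFun (p i).2) ∧
      ∀ r : (freeAct S n).carrier → (freeAct S n).carrier → Prop, IsCong (freeAct S n) r →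
        (∀ i, r (p i).1 (p i).2) →
        ∀ x y, q.toFun x = q.toFun y → r x y

/-- A pure epimorphism of `S`-acts. -/
def IsPureEpi {X Y : SAct S} (ψ : SMap X Y) : Prop :=
  Function.Surjective ψ.toFun ∧
    ∀ (M : SAct S), FinPresented M → ∀ f : SMap M Y, ∃ g : SMap M X, ψ.comp g = f

/-- The class of retracts of coproducts of finitely presented acts. -/
def RIFPClass (S : Type u) [Monoid S] : ActClass S :=
  fun A => ∃ (ι : Type u) (F : ι → SAct S),
    (∀ i, FinPresented (F i)) ∧ ActRetract A (SAct.sigmaCoprod F)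

/-- The one-element `S`-act. -/
def oneAct (S : Type u) [Monoid S] : SAct S :=
  ⟨PUnit, fun _ _ => PUnit.unit, fun _ => rfl, fun _ _ _ => rfl⟩

/-- The unique map to the one-element act. -/
def bangMap (A : SAct S) : SMap A (oneAct S) := ⟨fun _ => PUnit.unit, fun _ _ => rfl⟩

/-- The monoid `S` as a right `S`-act. -/
def regAct (S : Type u) [Monoid S] : SAct S := ⟨S, fun a s => a * s, mul_one, mul_assoc⟩

/-- The set of fixed points of an `S`-act. -/
def FixSet (A : SAct S) : Set A.carrier := {a | ∀ s : S, A.act a s = a}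

/-- The Rees quotient of `Y` collapsing the subset `T` (closed under the action) to a point. -/
def reesQuot (Y : SAct S) (T : Set Y.carrier) (hT : ∀ t ∈ T, ∀ s : S, Y.act t s ∈ T) :
    SAct S where
  carrier := Quot (fun a b => a = b ∨ (a ∈ T ∧ b ∈ T))
  act q s := Quot.lift (fun y => Quot.mk _ (Y.act y s))
    (fun a b hab => by
      rcases hab with h | ⟨ha, hb⟩
      · rw [h]
      · exact Quot.sound (Or.inr ⟨hT a ha s, hT b hb s⟩)) q
  act_one q := by
    induction q using Quot.ind with
    | _ y => exact congrArg (Quot.mk _) (Y.act_one y)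
  act_mul q s t := by
    induction q using Quot.ind with
    | _ y => exact congrArg (Quot.mk _) (Y.act_mul y s t)

/-- The class of monomorphisms whose Rees quotient lies in `𝒳`. -/
def XMonoClass (𝒳 : ActClass S) : MapClass S :=
  fun {X Y} f =>
    Function.Injective f.toFun ∧
      𝒳 (reesQuot Y (Set.range f.toFun)
        (fun t ht s => by
          obtain ⟨x, rfl⟩ := ht
          exact ⟨X.act x s, f.map_act x s⟩))

/-- The type of all `S`-maps (arrows). -/
def ArrowCls (S : Type u) [Monoid S] : Type (u + 1) := Σ (A B : SAct S), SMap A B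

/-- The class of pushouts of maps in `𝒞`. -/
def pushoutsOf (𝒞 : MapClass S) : MapClass S :=
  fun {X P} fbar => ∃ (A B : SAct S) (f : SMap A B) (u : SMap A X) (v : SMap B P),
    𝒞 f ∧ IsPushoutSq f u fbar v

/-- `h` is a transfinite composition of maps in `𝒟`. -/
def IsTransfiniteCompOf (𝒟 : MapClass S) {A L : SAct S} (h : SMap A L) : Prop :=
  ∃ (lam : Ordinal.{u}), Ordinal.omega0 ≤ lam ∧
    ∃ (Φ : LambdaSequence S lam) (h0 : (0 : Ordinal.{u}) < lam),
      (∀ (b : Ordinal.{u}) (hb : b + 1 < lam),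
        𝒟 (Φ.seq.map b (b + 1) (le_self_add : b ≤ b + 1) hb)) ∧
      Φ.seq.obj 0 h0 = A ∧ Φ.cocone.pt = L ∧ HEq (Φ.cocone.ι 0 h0) h

/-- `ret(𝒞)`: retracts of transfinite compositions of pushouts of maps in `𝒞`. -/
def retClass (𝒞 : MapClass S) : MapClass S :=
  fun {A _} g => ∃ (B : SAct S) (f : SMap A B),
    IsTransfiniteCompOf (pushoutsOf 𝒞) f ∧ RetractOfMap g f

/-- The class of pure epimorphisms. -/
def PureEpiClass (S : Type u) [Monoid S] : MapClass S := fun {_ _} f => IsPureEpi f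

/-- The subact `{z}` of `S`, for a left zero `z`. -/
def zSub (z : S) (hz : ∀ s : S, z * s = z) : SAct S :=
  (regAct S).sub {z} (fun t ht s => by
    change t = z at ht; change (regAct S).act t s = z
    rw [ht]; exact hz s)

/-- The inclusion `{z} → S`, for a left zero `z`. -/
def zIncl (z : S) (hz : ∀ s : S, z * s = z) : SMap (zSub z hz) (regAct S) :=
  ⟨fun t => t.1, fun _ _ => rfl⟩

/-- The subact `K_d = g⁻¹(d)` of `C`, for a fixed point `d` of `D`. -/
def kerAct {C D : SAct S} (g : SMap C D) (d : D.carrier) (hd : d ∈ FixSet D) : SAct S :=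
  C.sub {c | g.toFun c = d} (fun c hc s => by
    simp only [Set.mem_setOf_eq] at hc ⊢
    rw [g.map_act, hc]
    exact hd s)

/-- A centred `S`-act: an act with exactly one fixed point. -/
def CAct (S : Type u) [Monoid S] : Type (u + 1) :=
  {A : SAct S // ∃! a : A.carrier, ∀ s : S, A.act a s = a}

/-- A class of maps of centred `S`-acts. -/
abbrev MapClassC (S : Type u) [Monoid S] : Type (u + 1) :=
  ∀ (A B : CAct S), SMap A.1 B.1 → Prop

/-- `C^□` in the category of centred `S`-acts. -/
def rlpCC (𝒞 : MapClassC S) : MapClassC S :=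
  fun _ _ g => ∀ (X Y : CAct S) (f : SMap X.1 Y.1), 𝒞 X Y f → Lifts f g

/-- `□C` in the category of centred `S`-acts. -/
def llpCC (𝒞 : MapClassC S) : MapClassC S :=
  fun _ _ f => ∀ (X Y : CAct S) (g : SMap X.1 Y.1), 𝒞 X Y g → Lifts f g

/-- A weak factorization system in the category of centred `S`-acts. -/
structure IsWFSC (L R : MapClassC S) : Prop where
  rlp_eq : ∀ (A B : CAct S) (g : SMap A.1 B.1), R A B g ↔ rlpCC L A B g
  llp_eq : ∀ (A B : CAct S) (f : SMap A.1 B.1), L A B f ↔ llpCC R A B f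
  factor : ∀ (A B : CAct S) (h : SMap A.1 B.1),
    ∃ (C : CAct S) (f : SMap A.1 C.1) (g : SMap C.1 B.1), L A C f ∧ R C B g ∧ g.comp f = h

/-- The one-element centred `S`-act `0`. -/
def oneCAct (S : Type u) [Monoid S] : CAct S :=
  ⟨oneAct S, PUnit.unit, fun _ => rfl, fun _ _ => rfl⟩

/-- The unique map `0 → X` of centred `S`-acts. -/
noncomputable def zeroTo (X : CAct S) : SMap (oneCAct S).1 X.1 :=
  ⟨fun _ => X.2.choose, fun _ s => (X.2.choose_spec.1 s).symm⟩
/-! Factor `0 → A` as `0 → P` in `L` followed by `g : P → A` in `R`; then `P ∈ 𝒳`, and for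
`P' ∈ 𝒳` a diagonal lift in the square from `0 → P'` to `g` is the required factorization. -/

theorem SMap.ext {A B : SAct S} {f g : SMap A B} (h : f.toFun = g.toFun) : f = g := by
  cases f; cases g; cases h; rfl

theorem eq_zeroTo (X : CAct S) (f : SMap (oneCAct S).1 X.1) : f = zeroTo X :=
  SMap.ext <| funext fun u => X.2.unique (fun s => (f.map_act u s).symm) X.2.choose_spec.1

theorem IsWFSC.lifts {L R : MapClassC S} (hwfs : IsWFSC L R) {A B C D : CAct S}
    {f : SMap A.1 B.1} {g : SMap C.1 D.1} (hf : L A B f) (hg : R C D g) : Lifts f g :=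
  (hwfs.llp_eq A B f).mp hf C D g hg

theorem exists_comp_eq_of_lifts_zeroTo {P P' A : CAct S} {g : SMap P.1 A.1}
    (hlift : Lifts (zeroTo P') g) (g' : SMap P'.1 A.1) : ∃ f : SMap P'.1 P.1, g.comp f = g' := by
  obtain ⟨f, -, hf⟩ :=
    hlift (zeroTo P) g' (by rw [eq_zeroTo A (g.comp _), eq_zeroTo A (g'.comp _)])
  exact ⟨f, hf⟩

theorem statement19_general
    (𝒳 : CAct S → Prop) (L R : MapClassC S) (hwfs : IsWFSC L R)
    (hL0 : ∀ X : CAct S, L (oneCAct S) X (zeroTo X) ↔ 𝒳 X) :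
    ∀ A : CAct S, ∃ (P : CAct S) (g : SMap P.1 A.1), 𝒳 P ∧
      ∀ (P' : CAct S) (g' : SMap P'.1 A.1), 𝒳 P' →
        ∃ f : SMap P'.1 P.1, g.comp f = g' := by
  intro A
  obtain ⟨P, f, g, hf, hg, -⟩ := hwfs.factor (oneCAct S) A (zeroTo A)
  rw [eq_zeroTo P f] at hf
  refine ⟨P, g, (hL0 P).mp hf, fun P' g' hP' => ?_⟩
  exact exists_comp_eq_of_lifts_zeroTo (hwfs.lifts ((hL0 P').mpr hP') hg) g'

theorem statement19 (z : S) (hz : ∀ s : S, z * s = z ∧ s * z = z)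
    (𝒳 : CAct S → Prop) (L R : MapClassC S) (hwfs : IsWFSC L R)
    (hL0 : ∀ X : CAct S, L (oneCAct S) X (zeroTo X) ↔ 𝒳 X) :
    ∀ A : CAct S, ∃ (P : CAct S) (g : SMap P.1 A.1), 𝒳 P ∧
      ∀ (P' : CAct S) (g' : SMap P'.1 A.1), 𝒳 P' →
        ∃ f : SMap P'.1 P.1, g.comp f = g' :=
  statement19_general 𝒳 L R hwfs hL0
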